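/- If the partition λ of n is lexicographically greater than the partition μ of n, or if μ has more parts than λ, then there is no semistandard Young tableau of shape μ and content (type) λ; that is, the Kostka number K_{μλ} equals 0. -/

import Mathlib

/-!
Entries of a semistandard tableau strictly increase down columns, so every entry in row `i` is
at least `i`. Hence all cells with entry `< m` lie in the first `m` rows, which gives the
dominance inequality `λ₀ + ⋯ + λₘ₋₁ ≤ μ₀ + ⋯ + μₘ₋₁`. It fails for `m = i + 1` at the first
index `i` where `μ` and `λ` differ when `μ < λ` lexicographically (a missing part of `μ` reads
as `0`, and parts of `λ` are positive). If `μ` has more parts than `λ`, the first cell of row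
`ℓ(λ)` holds an entry `≥ ℓ(λ)`, which `λ` allows no copies of.
-/

/-- `l` is a partition of `n`: a weakly decreasing list of positive integers summing to `n`. -/
def IsPartitionOf (n : ℕ) (l : List ℕ) : Prop :=
  l.Pairwise (· ≥ ·) ∧ (∀ x ∈ l, 0 < x) ∧ l.sum = n

/-- The content of a semistandard Young tableau: the number of cells with entry `k`. -/
def ssytContent {μ : YoungDiagram} (T : SemistandardYoungTableau μ) (k : ℕ) : ℕ :=
  (μ.cells.filter (fun c => T c.1 c.2 = k)).card

theorem SemistandardYoungTableau.row_le_entry {μ : YoungDiagram} (T : SemistandardYoungTableau μ)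
    {i j : ℕ} (hij : (i, j) ∈ μ) : i ≤ T i j := by
  induction i with
  | zero => exact Nat.zero_le _
  | succ i ih =>
    exact (ih (μ.up_left_mem i.le_succ le_rfl hij)).trans_lt (T.col_strict i.lt_succ_self hij)

theorem ssytContent_entry_pos {μ : YoungDiagram} (T : SemistandardYoungTableau μ) {i j : ℕ}
    (hij : (i, j) ∈ μ) : 0 < ssytContent T (T i j) :=
  Finset.card_pos.mpr ⟨(i, j), Finset.mem_filter.mpr ⟨hij, rfl⟩⟩

theorem YoungDiagram.sum_range_rowLen (μ : YoungDiagram) (m : ℕ) :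
    ∑ i ∈ Finset.range m, μ.rowLen i = (μ.cells.filter (fun c => c.1 ∈ Finset.range m)).card := by
  simp only [YoungDiagram.rowLen_eq_card, YoungDiagram.row]
  exact Finset.sum_card_fiberwise_eq_card_filter _ _ _

theorem sum_range_ssytContent_le_sum_range_rowLen {μ : YoungDiagram}
    (T : SemistandardYoungTableau μ) (m : ℕ) :
    ∑ k ∈ Finset.range m, ssytContent T k ≤ ∑ i ∈ Finset.range m, μ.rowLen i := by
  simp only [ssytContent, Finset.sum_card_fiberwise_eq_card_filter, μ.sum_range_rowLen]
  refine Finset.card_le_card (Finset.monotone_filter_right _ fun c hc hlt => ?_)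
  simp only [Finset.mem_range] at hlt ⊢
  exact (T.row_le_entry hc).trans_lt hlt

theorem YoungDiagram.rowLen_ofRowLens_eq_getD (w : List ℕ) (hw : w.SortedGE) (i : ℕ) :
    (YoungDiagram.ofRowLens w hw).rowLen i = w.getD i 0 := by
  rcases lt_or_ge i w.length with hi | hi <;>
    simp [YoungDiagram.rowLen, Nat.find_eq_iff, YoungDiagram.mem_ofRowLens, hi]

theorem List.Lex.exists_getD_lt {l₁ l₂ : List ℕ} (h : List.Lex (· < ·) l₁ l₂)
    (hpos : ∀ x ∈ l₂, 0 < x) :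
    ∃ i, (∀ k < i, l₁.getD k 0 = l₂.getD k 0) ∧ l₁.getD i 0 < l₂.getD i 0 := by
  induction h with
  | nil => exact ⟨0, by simp, by simpa using hpos _ List.mem_cons_self⟩
  | rel hab => exact ⟨0, by simp, by simpa using hab⟩
  | cons _ ih =>
    obtain ⟨i, hprefix, hlt⟩ := ih fun x hx => hpos x (List.mem_cons_of_mem _ hx)
    refine ⟨i + 1, fun k hk => ?_, by simpa using hlt⟩
    cases k with
    | zero => rfl
    | succ k => simpa using hprefix k (by omega)

/-- If the partition `λ` of `n` is lexicographically greater than the partition `μ` of `n`,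
or `μ` has more parts than `λ`, then there is no semistandard Young tableau of shape `μ`
and content `λ` (with `λ.get k` copies of the entry `k`); i.e. the Kostka number
`K_{μλ}` is zero. -/
theorem kostka_eq_zero (n : ℕ) (lam mu : List ℕ)
    (hlam : IsPartitionOf n lam) (hmu : IsPartitionOf n mu)
    (hmusort : mu.Pairwise (· ≥ ·))
    (h : List.Lex (· < ·) mu lam ∨ mu.length > lam.length) :
    ¬ ∃ T : SemistandardYoungTableau (YoungDiagram.ofRowLens mu hmusort.sortedGE),
        ∀ k : ℕ, ssytContent T k = lam.getD k 0 := by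
  rintro ⟨T, hT⟩
  rcases h with hlex | hlen
  · obtain ⟨i, hprefix, hlt⟩ := hlex.exists_getD_lt hlam.2.1
    have hdom := sum_range_ssytContent_le_sum_range_rowLen T (i + 1)
    simp only [hT, YoungDiagram.rowLen_ofRowLens_eq_getD, Finset.sum_range_succ] at hdom
    rw [Finset.sum_congr rfl fun k hk => hprefix k (Finset.mem_range.mp hk)] at hdom
    omega
  · have hcell : (lam.length, 0) ∈ YoungDiagram.ofRowLens mu hmusort.sortedGE :=
      YoungDiagram.mem_ofRowLens.mpr ⟨hlen, hmu.2.1 _ (List.getElem_mem hlen)⟩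
    have hpos := ssytContent_entry_pos T hcell
    rw [hT, List.getD_eq_default _ _ (T.row_le_entry hcell)] at hpos
    exact hpos.false
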